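/- arXiv:1512.04084 — 2 statements merged into one kernel-verified Lean document; each statement's English description precedes it below -/
import Mathlib

section
/- Let r be a positive integer and let U_r be the random variable distributed uniformly on {0,1,...,r}. Then for all partitions λ and μ of the same weight n, λ dominates μ if and only if condition C(λ,μ,U_r) holds; i.e., independently filling each cell of the Ferrers diagrams of λ and μ with a number of balls drawn from U_r, λ dominates μ iff for all j, t ≥ 0 the probability that the Ferrers diagram of λ contains j balls in total with at most t balls in each row is at most the corresponding probability for μ. -/
open Finset

noncomputable section

/-- The ℕ×ℕ Toeplitz matrix of a sequence `p`, with `(T_p)_{i,j} = p_{j-i}`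
(and `0` when `j < i`, i.e. `p_n = 0` for negative `n`). -/
def toeplitz (p : ℕ → ℝ) : Matrix ℕ ℕ ℝ :=
  fun i j => if i ≤ j then p (j - i) else 0

/-- A matrix is totally non-negative of order `k` iff every minor of size at
most `k` (rows and columns chosen strictly increasingly) is non-negative. -/
def IsTN (k : ℕ) (M : Matrix ℕ ℕ ℝ) : Prop :=
  ∀ l : ℕ, l ≤ k → ∀ r c : Fin l → ℕ, StrictMono r → StrictMono c →
    0 ≤ (M.submatrix r c).det

/-- A matrix is totally positive of order `k` iff every minor of size at
most `k` is positive. -/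
def IsTP (k : ℕ) (M : Matrix ℕ ℕ ℝ) : Prop :=
  ∀ l : ℕ, l ≤ k → ∀ r c : Fin l → ℕ, StrictMono r → StrictMono c →
    0 < (M.submatrix r c).det

/-- The matrix `S_p` with `(S_p)_{i,j} = (p^i)_j`, the coefficient of `x^j` in
`p(x)^i` where `p(x) = Σ p_n x^n` (and `p(x)^0 = 1`). -/
def sMatrix (p : ℕ → ℝ) : Matrix ℕ ℕ ℝ :=
  fun i j => PowerSeries.coeff (R := ℝ) j (PowerSeries.mk p ^ i)

/-- A partition: a non-increasing function from the positive integers to ℕ with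
finite support (we set the irrelevant value at `0` to be `0`). -/
structure PartitionSeq where
  part : ℕ → ℕ
  zero : part 0 = 0
  antitone : ∀ ⦃i j : ℕ⦄, 1 ≤ i → i ≤ j → part j ≤ part i
  finSupp : (Function.support part).Finite

/-- The weight `|λ|` of a partition. -/
def PartitionSeq.weight (lam : PartitionSeq) : ℕ := ∑ᶠ i, lam.part i

/-- `λ` dominates `μ`: equal weights and partial sums of `λ` are at least
those of `μ`. -/
def PartitionSeq.Dominates (lam mu : PartitionSeq) : Prop :=
  lam.weight = mu.weight ∧
  ∀ j : ℕ, 1 ≤ j →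
    ∑ i ∈ Finset.Icc 1 j, mu.part i ≤ ∑ i ∈ Finset.Icc 1 j, lam.part i

/-- `f(λ, p(x), t, x) = ∏_i (p(x)^{λ(i)} |_t)`, the product over rows of the
truncations to degree `t` of powers of the generating function. -/
def fPoly (lam : PartitionSeq) (p : ℕ → ℝ) (t : ℕ) : Polynomial ℝ :=
  ∏ᶠ i : ℕ, PowerSeries.trunc (t + 1) (PowerSeries.mk p ^ lam.part i)

/-- `P(E(λ,X,j,t))` for `X` with probability mass function `p`: the coefficient
of `x^j` in `∏_i ((p_X(x))^{λ(i)} |_t)`. -/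
def probE (p : ℕ → ℝ) (lam : PartitionSeq) (j t : ℕ) : ℝ :=
  (fPoly lam p t).coeff j

/-- Condition `C(λ,μ,X)`: `P(E(λ,X,j,t)) ≤ P(E(μ,X,j,t))` for all `j, t ∈ ℕ`. -/
def CondC (p : ℕ → ℝ) (lam mu : PartitionSeq) : Prop :=
  ∀ j t : ℕ, probE p lam j t ≤ probE p mu j t

/-!
Write `c_m(k)` for the coefficient of `x^k` in `p(x)^m`. If the Toeplitz matrix of `p` is TN₂,
then so is the matrix `S_p = (c_m(k))_{m,k}`, by the Cauchy–Binet formula of order 2. Total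
nonnegativity of order 2 of `S_p` is what makes moving one cell of a Ferrers diagram from a longer
row to a shorter one increase every coefficient of `∏_i (p(x)^{λ_i} |_t)`: the window `≤ t` breaks
the symmetry of the two rows only in favour of the shorter one. Since `λ ⊵ μ` iff the column sums
of `λ` are pointwise at most those of `μ`, and then `μ` is reached from `λ` by such moves,
dominance implies condition `C`.

Conversely, if `p` is positive exactly on `{0, …, r}`, the top degree of `∏_i (p(x)^{λ_i} |_t)` is
`∑_i min t (r λ_i)`. Condition `C` forces it to be at most the one for `μ`, and `t = r k` turns
this into the column-sum inequalities, i.e. into `λ ⊵ μ`. The law of `U_r` has both properties.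
-/

open PowerSeries (coeff mk trunc)

/-! ### Total nonnegativity of order 2 -/

theorem isTN_two_iff {M : Matrix ℕ ℕ ℝ} :
    IsTN 2 M ↔ (∀ i j, 0 ≤ M i j) ∧
      ∀ ⦃i i' j j'⦄, i ≤ i' → j ≤ j' → M i j' * M i' j ≤ M i j * M i' j' := by
  constructor
  · intro hM
    refine ⟨fun i j => ?_, fun i i' j j' hi hj => ?_⟩
    · have := hM 1 (by norm_num) ![i] ![j] (Subsingleton.strictMono _)
        (Subsingleton.strictMono _)
      rwa [Matrix.det_fin_one] at this
    rcases hi.eq_or_lt with rfl | hi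
    · exact (mul_comm _ _).le
    rcases hj.eq_or_lt with rfl | hj
    · exact le_rfl
    have := hM 2 le_rfl ![i, i'] ![j, j'] (Fin.strictMono_iff_lt_succ.2 (by simpa))
      (Fin.strictMono_iff_lt_succ.2 (by simpa))
    rw [Matrix.det_fin_two] at this
    simp only [Fin.isValue, Matrix.submatrix_apply, Matrix.cons_val_zero, Matrix.cons_val_one,
      Matrix.cons_val_fin_one, sub_nonneg] at this
    exact this
  · rintro ⟨hpos, hminor⟩ l hl r c hr hc
    interval_cases l
    · simp
    · simpa [Matrix.det_fin_one] using hpos (r 0) (c 0)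
    · rw [Matrix.det_fin_two]
      simpa using hminor (hr.monotone (Fin.zero_le 1)) (hc.monotone (Fin.zero_le 1))

theorem sum_mul_sum_le_sum_mul_sum_of_minors {ι : Type*} [LinearOrder ι] (s : Finset ι)
    {a a' b b' : ι → ℝ} (ha : ∀ ⦃x y⦄, x ≤ y → a y * a' x ≤ a x * a' y)
    (hb : ∀ ⦃x y⦄, x ≤ y → b y * b' x ≤ b x * b' y) :
    (∑ x ∈ s, a x * b' x) * (∑ x ∈ s, a' x * b x) ≤
      (∑ x ∈ s, a x * b x) * (∑ x ∈ s, a' x * b' x) := by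
  -- the Cauchy–Binet formula of order 2
  have binet : ∑ x ∈ s, ∑ y ∈ s, (a x * a' y - a y * a' x) * (b x * b' y - b y * b' x) =
      2 * ((∑ x ∈ s, a x * b x) * (∑ x ∈ s, a' x * b' x) -
        (∑ x ∈ s, a x * b' x) * (∑ x ∈ s, a' x * b x)) := by
    have e : ∀ x y, (a x * a' y - a y * a' x) * (b x * b' y - b y * b' x) =
        a x * b x * (a' y * b' y) - a x * b' x * (a' y * b y) -
          a' x * b x * (a y * b' y) + a' x * b' x * (a y * b y) := fun x y => by ring
    simp only [e, Finset.sum_add_distrib, Finset.sum_sub_distrib, ← Finset.sum_mul_sum]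
    ring
  have : 0 ≤ ∑ x ∈ s, ∑ y ∈ s, (a x * a' y - a y * a' x) * (b x * b' y - b y * b' x) := by
    refine Finset.sum_nonneg fun x _ => Finset.sum_nonneg fun y _ => ?_
    rcases le_total x y with h | h
    · exact mul_nonneg (by linarith [ha h]) (by linarith [hb h])
    · exact mul_nonneg_of_nonpos_of_nonpos (by linarith [ha h]) (by linarith [hb h])
  linarith

theorem toeplitz_coeff_mul (F G : PowerSeries ℝ) {N j : ℕ} (hj : j < N) (i : ℕ) :
    toeplitz (fun n => coeff n (F * G)) i j =
      ∑ k ∈ range N, toeplitz (fun n => coeff n F) i k * toeplitz (fun n => coeff n G) k j := by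
  simp only [toeplitz]
  split_ifs with hij
  · rw [← Finset.sum_subset (s₁ := Ico i (j + 1))
      (fun k hk => by simp only [mem_Ico, mem_range] at hk ⊢; omega)
      (fun k _ hk => by
        simp only [mem_Ico, not_and, not_lt] at hk
        split_ifs <;> first | omega | simp),
      Finset.sum_Ico_eq_sum_range, PowerSeries.coeff_mul,
      Finset.Nat.sum_antidiagonal_eq_sum_range_succ (fun x y => coeff x F * coeff y G)]
    refine Finset.sum_congr (by congr 1; omega) fun x hx => ?_
    rw [mem_range] at hx
    rw [if_pos (by omega), if_pos (by omega), Nat.add_sub_cancel_left, Nat.sub_sub]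
  · exact (Finset.sum_eq_zero fun k _ => by split_ifs <;> first | omega | simp).symm

theorem isTN_two_toeplitz_mul {F G : PowerSeries ℝ} (hF : IsTN 2 (toeplitz fun n => coeff n F))
    (hG : IsTN 2 (toeplitz fun n => coeff n G)) :
    IsTN 2 (toeplitz fun n => coeff n (F * G)) := by
  rw [isTN_two_iff] at hF hG ⊢
  refine ⟨fun i j => ?_, fun i i' j j' hi hj => ?_⟩
  · rw [toeplitz_coeff_mul F G (Nat.lt_succ_self j)]
    exact Finset.sum_nonneg fun k _ => mul_nonneg (hF.1 _ _) (hG.1 _ _)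
  · simp only [toeplitz_coeff_mul F G (Nat.lt_succ_of_le hj),
      toeplitz_coeff_mul F G (Nat.lt_succ_self j')]
    exact sum_mul_sum_le_sum_mul_sum_of_minors _ (fun x y hxy => hF.2 hi hxy)
      (fun x y hxy => by linarith [hG.2 hxy hj])

theorem isTN_two_toeplitz_sMatrix_row {p : ℕ → ℝ} (hp : IsTN 2 (toeplitz p)) (m : ℕ) :
    IsTN 2 (toeplitz (sMatrix p m)) := by
  induction m with
  | zero =>
    refine isTN_two_iff.2 ⟨fun i j => ?_, fun i i' j j' hi hj => ?_⟩ <;>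
      simp only [sMatrix, toeplitz, pow_zero, PowerSeries.coeff_one] <;>
      split_ifs <;> first | omega | norm_num
  | succ m ih =>
    have hS : sMatrix p (m + 1) = fun n => coeff n (mk p ^ m * mk p) := by
      ext n
      simp [sMatrix, pow_succ]
    rw [hS]
    exact isTN_two_toeplitz_mul ih (by simpa only [PowerSeries.coeff_mk] using hp)

theorem isTN_two_sMatrix {p : ℕ → ℝ} (hp : IsTN 2 (toeplitz p)) : IsTN 2 (sMatrix p) := by
  have hrow := isTN_two_toeplitz_sMatrix_row hp
  have hnonneg : ∀ m k, 0 ≤ sMatrix p m k := fun m k => by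
    simpa [toeplitz] using (isTN_two_iff.1 (hrow m)).1 0 k
  refine isTN_two_iff.2 ⟨hnonneg, fun a b k l hab hkl => ?_⟩
  obtain ⟨d, rfl⟩ := Nat.exists_eq_add_of_le hab
  -- rows `a` and `a + d` of `S_p` are rows `0` and `d` of `S_p` times the Toeplitz matrix of
  -- row `a`
  have hrows : ∀ (F : PowerSeries ℝ) n, n ≤ l → coeff n (F * mk p ^ a) =
      ∑ x ∈ range (l + 1), toeplitz (fun n => coeff n F) 0 x * toeplitz (sMatrix p a) x n :=
    fun F n hn => by simpa [toeplitz, sMatrix] using toeplitz_coeff_mul F _ (Nat.lt_succ_of_le hn) 0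
  have hS : ∀ e n, sMatrix p (a + e) n = coeff n (mk p ^ e * mk p ^ a) :=
    fun e n => by rw [← pow_add, add_comm]; rfl
  have hS₀ := hS 0
  simp only [pow_zero, add_zero] at hS₀
  rw [hS₀, hS₀, hS, hS, hrows _ _ hkl, hrows _ _ le_rfl, hrows _ _ hkl, hrows _ _ le_rfl]
  refine sum_mul_sum_le_sum_mul_sum_of_minors _ (fun x y hxy => ?_)
    (fun x y hxy => by linarith [(isTN_two_iff.1 (hrow a)).2 hxy hkl])
  simp only [toeplitz, PowerSeries.coeff_one, zero_le, if_true, Nat.sub_zero]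
  rcases Nat.eq_zero_or_pos y with rfl | hy
  · obtain rfl := Nat.le_zero.1 hxy
    rfl
  · rw [if_neg hy.ne', zero_mul]
    exact mul_nonneg (by split_ifs <;> norm_num) (hnonneg d y)

/-! ### Moving one cell between two rows -/

theorem sum_filter_nonneg_of_antisymm {α : Type*} {s : Finset α} (σ : α → α)
    (hσs : ∀ x ∈ s, σ x ∈ s) (hσ : ∀ x, σ (σ x) = x) {g : α → ℝ} (hg : ∀ x, g (σ x) = -g x)
    (P : α → Prop) [DecidablePred P] (hP : ∀ x ∈ s, P x → ¬P (σ x) → 0 ≤ g x) :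
    0 ≤ ∑ x ∈ s with P x, g x := by
  rw [Finset.sum_filter]
  have hswap : ∑ x ∈ s, (if P x then g x else 0) = ∑ x ∈ s, (if P (σ x) then -g x else 0) :=
    Finset.sum_nbij' σ σ hσs hσs (fun x _ => hσ x) (fun x _ => hσ x)
      (fun x _ => by rw [hσ, hg, neg_neg])
  have : 0 ≤ ∑ x ∈ s, ((if P x then g x else 0) + (if P (σ x) then -g x else 0)) := by
    refine Finset.sum_nonneg fun x hx => ?_
    have h₁ := hP x hx
    have h₂ := hP (σ x) (hσs x hx)
    rw [hσ, hg] at h₂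
    split_ifs <;> first | linarith | simp_all
  rw [Finset.sum_add_distrib, ← hswap] at this
  linarith

theorem sum_antidiagonal_sum_antidiagonal_fst {M : Type*} [AddCommMonoid M]
    (f : ℕ → ℕ → ℕ → M) (n : ℕ) :
    ∑ x ∈ antidiagonal n, ∑ y ∈ antidiagonal x.1, f y.1 y.2 x.2 =
      ∑ x ∈ antidiagonal n, ∑ y ∈ antidiagonal x.2, f y.1 x.1 y.2 := by
  rw [Finset.sum_sigma', Finset.sum_sigma']
  refine Finset.sum_nbij' (fun z => ⟨(z.2.2, z.2.1 + z.1.2), (z.2.1, z.1.2)⟩)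
    (fun z => ⟨(z.2.1 + z.1.1, z.2.2), (z.2.1, z.1.1)⟩) ?_ ?_ ?_ ?_ ?_
  all_goals
    rintro ⟨⟨a, b⟩, ⟨c, d⟩⟩ h
    simp only [Finset.mem_sigma, Finset.HasAntidiagonal.mem_antidiagonal, and_true] at h ⊢
  all_goals first | omega | (obtain ⟨-, rfl⟩ := h; rfl)

def truncPow (p : ℕ → ℝ) (t m : ℕ) : Polynomial ℝ :=
  trunc (t + 1) (mk p ^ m)

theorem truncPow_zero (p : ℕ → ℝ) (t : ℕ) : truncPow p t 0 = 1 := by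
  simp [truncPow, PowerSeries.trunc_one]

theorem coeff_truncPow (p : ℕ → ℝ) (t m k : ℕ) :
    (truncPow p t m).coeff k = if k ≤ t then sMatrix p m k else 0 := by
  simp [truncPow, PowerSeries.coeff_trunc, sMatrix]

theorem coeff_truncPow_succ_mul (p : ℕ → ℝ) (t a b j : ℕ) :
    (truncPow p t (a + 1) * truncPow p t b).coeff j =
      ∑ x ∈ antidiagonal j, p x.1 *
        ∑ y ∈ antidiagonal x.2 with y.1 + x.1 ≤ t ∧ y.2 ≤ t, sMatrix p a y.1 * sMatrix p b y.2 := by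
  have hS : ∀ k, sMatrix p (a + 1) k = ∑ y ∈ antidiagonal k, sMatrix p a y.1 * p y.2 :=
    fun k => by simp [sMatrix, pow_succ, PowerSeries.coeff_mul]
  simp only [Finset.mul_sum, Finset.sum_filter, mul_ite, mul_zero]
  refine Eq.trans ?_ (sum_antidiagonal_sum_antidiagonal_fst
    (fun u s y => if u + s ≤ t ∧ y ≤ t then p s * (sMatrix p a u * sMatrix p b y) else 0) j)
  rw [Polynomial.coeff_mul]
  refine Finset.sum_congr rfl fun x _ => ?_
  simp only [coeff_truncPow, hS]
  split_ifs
  · rw [Finset.sum_mul]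
    refine Finset.sum_congr rfl fun y hy => ?_
    rw [Finset.HasAntidiagonal.mem_antidiagonal] at hy
    rw [if_pos (by omega)]
    ring
  all_goals
    simp only [mul_zero, zero_mul]
    refine (Finset.sum_eq_zero fun y hy => if_neg ?_).symm
    rw [Finset.HasAntidiagonal.mem_antidiagonal] at hy
    omega

theorem coeff_truncPow_transfer_le {p : ℕ → ℝ} (hS : IsTN 2 (sMatrix p)) {a b : ℕ}
    (hba : b ≤ a) (t j : ℕ) :
    (truncPow p t (a + 1) * truncPow p t b).coeff j ≤
      (truncPow p t a * truncPow p t (b + 1)).coeff j := by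
  obtain ⟨hnonneg, hminor⟩ := isTN_two_iff.1 hS
  rw [mul_comm (truncPow p t a), coeff_truncPow_succ_mul, coeff_truncPow_succ_mul]
  refine Finset.sum_le_sum fun x _ =>
    mul_le_mul_of_nonneg_left ?_ (by simpa [sMatrix] using hnonneg 1 x.1)
  rw [← sub_nonneg, ← Finset.sum_sub_distrib]
  -- the summand is antisymmetric under swapping the two rows, and the window is
  -- asymmetric only where the shorter row gets the larger share
  refine sum_filter_nonneg_of_antisymm Prod.swap
    (fun y hy => Finset.HasAntidiagonal.swap_mem_antidiagonal.2 hy) Prod.swap_swap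
    (g := fun y => sMatrix p b y.1 * sMatrix p a y.2 - sMatrix p a y.1 * sMatrix p b y.2)
    (fun y => by simp only [Prod.fst_swap, Prod.snd_swap]; ring) _ ?_
  rintro ⟨u, v⟩ _ ⟨huv, hv⟩ hswap
  have huv : u ≤ v := by simp only [Prod.fst_swap, Prod.snd_swap] at hswap ⊢; omega
  linarith [hminor hba huv]

/-! ### Column sums -/

/-- For a multiset of row lengths, the number of cells in the first `k` columns of its diagram. -/
def sumMin (s : Multiset ℕ) (k : ℕ) : ℕ := (s.map (min k)).sum

@[simp]
theorem sumMin_zero (k : ℕ) : sumMin 0 k = 0 := rfl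

@[simp]
theorem sumMin_cons (z : ℕ) (s : Multiset ℕ) (k : ℕ) :
    sumMin (z ::ₘ s) k = min k z + sumMin s k := by
  simp [sumMin]

@[simp]
theorem sumMin_zero_right (s : Multiset ℕ) : sumMin s 0 = 0 := by
  simp [sumMin]

theorem sumMin_le_sum (s : Multiset ℕ) (k : ℕ) : sumMin s k ≤ s.sum := by
  simpa [sumMin] using Multiset.sum_map_le_sum_map _ id fun z _ => min_le_right k z

theorem sumMin_eq_sum_of_le {s : Multiset ℕ} {k : ℕ} (h : ∀ z ∈ s, z ≤ k) :
    sumMin s k = s.sum := by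
  rw [sumMin, Multiset.map_congr rfl fun z hz => min_eq_right (h z hz), Multiset.map_id']

theorem min_interpolate (y d e z : ℕ) :
    e * min y z + d * min (y + d + e) z ≤ (d + e) * min (y + d) z := by
  rcases le_total z y with h | h
  · rw [min_eq_right h, min_eq_right (by omega), min_eq_right (by omega)]
    exact le_of_eq (by ring)
  rcases le_total z (y + d) with h' | h'
  · rw [min_eq_left h, min_eq_right h', min_eq_right (by omega)]
    nlinarith
  · rw [min_eq_left h, min_eq_left h']
    nlinarith [min_le_left (y + d + e) z]

theorem min_interpolate_eq {y d e z : ℕ} (hz : z ≤ y ∨ y + d + e ≤ z) :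
    e * min y z + d * min (y + d + e) z = (d + e) * min (y + d) z := by
  rcases hz with h | h
  · rw [min_eq_right h, min_eq_right (by omega), min_eq_right (by omega)]; ring
  · rw [min_eq_left (by omega), min_eq_left h, min_eq_left (by omega)]; ring

/-- Concavity of `sumMin s`, cleared of denominators. -/
theorem sumMin_interpolate (s : Multiset ℕ) (y d e : ℕ) :
    e * sumMin s y + d * sumMin s (y + d + e) ≤ (d + e) * sumMin s (y + d) := by
  simp only [sumMin, ← Multiset.sum_map_mul_left, ← Multiset.sum_map_add]
  exact Multiset.sum_map_le_sum_map _ _ fun z _ => min_interpolate y d e z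

theorem sumMin_interpolate_eq {s : Multiset ℕ} {y d e : ℕ}
    (hs : ∀ z ∈ s, z ≤ y ∨ y + d + e ≤ z) :
    e * sumMin s y + d * sumMin s (y + d + e) = (d + e) * sumMin s (y + d) := by
  simp only [sumMin, ← Multiset.sum_map_mul_left, ← Multiset.sum_map_add]
  exact congrArg Multiset.sum (Multiset.map_congr rfl fun z hz => min_interpolate_eq (hs z hz))

theorem sumMin_lt_of_affine {a b : Multiset ℕ} (hle : ∀ k, sumMin a k ≤ sumMin b k) {y d e : ℕ}
    (ha : ∀ z ∈ a, z ≤ y ∨ y + d + e ≤ z)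
    (hlt : 0 < d ∧ sumMin a (y + d + e) < sumMin b (y + d + e) ∨
      0 < e ∧ sumMin a y < sumMin b y) :
    sumMin a (y + d) < sumMin b (y + d) := by
  have hb := sumMin_interpolate b y d e
  have ha := sumMin_interpolate_eq ha
  have h₁ := hle y
  have h₂ := hle (y + d + e)
  by_contra! h
  rcases hlt with ⟨hd, hlt⟩ | ⟨he, hlt⟩ <;> nlinarith

theorem count_succ_eq_sumMin (s : Multiset ℕ) (k : ℕ) :
    (s.count (k + 1) : ℤ) = 2 * sumMin s (k + 1) - sumMin s k - sumMin s (k + 2) := by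
  induction s using Multiset.induction_on with
  | empty => simp
  | cons z s ih =>
    simp only [Multiset.count_cons, sumMin_cons]
    push_cast
    split_ifs <;> omega

theorem sumMin_transfer (x y : ℕ) (c : Multiset ℕ) (k : ℕ) (hyx : y ≤ x) :
    sumMin (x ::ₘ (y + 1) ::ₘ c) k =
      sumMin ((x + 1) ::ₘ y ::ₘ c) k + if y < k ∧ k ≤ x then 1 else 0 := by
  simp only [sumMin_cons]
  split_ifs <;> omega

theorem exists_transfer {a b : Multiset ℕ} (hsum : a.sum = b.sum)
    (hle : ∀ k, sumMin a k ≤ sumMin b k) {s₀ : ℕ} (hs₀ : sumMin a s₀ < sumMin b s₀) :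
    ∃ x y c, 0 ::ₘ a = (x + 1) ::ₘ y ::ₘ c ∧ y < s₀ ∧ s₀ ≤ x ∧
      ∀ k, y < k → k ≤ x → sumMin a k < sumMin b k := by
  have hs₀pos : 0 < s₀ := Nat.pos_of_ne_zero fun h => by simp [h] at hs₀
  have hX : (a.toFinset.filter (s₀ < ·)).Nonempty := by
    by_contra! hX
    have : sumMin a s₀ = a.sum := sumMin_eq_sum_of_le fun z hz => by
      by_contra! hz'
      exact Finset.notMem_empty z (hX ▸ Finset.mem_filter.2 ⟨Multiset.mem_toFinset.2 hz, hz'⟩)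
    linarith [sumMin_le_sum b s₀]
  have hY : ((0 ::ₘ a).toFinset.filter (· < s₀)).Nonempty :=
    ⟨0, Finset.mem_filter.2 ⟨by simp, hs₀pos⟩⟩
  -- the next row length above `s₀`, and the previous one below it (possibly an empty row)
  set x₁ := (a.toFinset.filter (s₀ < ·)).min' hX
  set y := ((0 ::ₘ a).toFinset.filter (· < s₀)).max' hY
  obtain ⟨hx₁a, hx₁⟩ := Finset.mem_filter.1 (Finset.min'_mem _ hX)
  obtain ⟨hya, hy⟩ := Finset.mem_filter.1 (Finset.max'_mem _ hY)
  rw [Multiset.mem_toFinset] at hx₁a hya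
  have hgap : ∀ z ∈ a, (z ≤ y ∨ s₀ ≤ z) ∧ (z ≤ s₀ ∨ x₁ ≤ z) := fun z hz => by
    constructor
    · by_contra! h
      have : z ≤ y := Finset.le_max' _ z
        (Finset.mem_filter.2 ⟨Multiset.mem_toFinset.2 (Multiset.mem_cons_of_mem hz), h.2⟩)
      omega
    · by_contra! h
      have : x₁ ≤ z := Finset.min'_le _ z (Finset.mem_filter.2 ⟨Multiset.mem_toFinset.2 hz, h.1⟩)
      omega
  obtain ⟨x, hx⟩ : ∃ x, x₁ = x + 1 := ⟨x₁ - 1, by omega⟩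
  refine ⟨x, y, ((0 ::ₘ a).erase x₁).erase y, ?_, hy, by omega, fun k hyk hkx => ?_⟩
  · rw [← hx, Multiset.cons_erase (Multiset.mem_erase_of_ne (by omega) |>.2 hya),
      Multiset.cons_erase (Multiset.mem_cons_of_mem hx₁a)]
  rcases le_or_gt k s₀ with hk | hk
  · obtain ⟨d, rfl⟩ := Nat.exists_eq_add_of_lt hyk
    obtain ⟨e, he⟩ := Nat.exists_eq_add_of_le hk
    refine sumMin_lt_of_affine (e := e) hle (fun z hz => ?_) (.inl ⟨by omega, ?_⟩)
    · have := (hgap z hz).1; omega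
    · rwa [← he]
  · obtain ⟨d, rfl⟩ := Nat.exists_eq_add_of_lt hk
    obtain ⟨e, he⟩ := Nat.exists_eq_add_of_lt (show s₀ + d + 1 < x₁ by omega)
    refine sumMin_lt_of_affine (y := s₀) (d := d + 1) (e := e + 1) hle (fun z hz => ?_)
      (.inr ⟨by omega, hs₀⟩)
    have := (hgap z hz).2
    omega

def truncPowProd (p : ℕ → ℝ) (t : ℕ) (s : Multiset ℕ) : Polynomial ℝ :=
  (s.map (truncPow p t)).prod

@[simp]
theorem truncPowProd_cons (p : ℕ → ℝ) (t m : ℕ) (s : Multiset ℕ) :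
    truncPowProd p t (m ::ₘ s) = truncPow p t m * truncPowProd p t s := by
  simp [truncPowProd]

theorem coeff_mul_le_coeff_mul {f g h : Polynomial ℝ} (hfg : ∀ k, f.coeff k ≤ g.coeff k)
    (hh : ∀ k, 0 ≤ h.coeff k) (j : ℕ) : (f * h).coeff j ≤ (g * h).coeff j := by
  simp only [Polynomial.coeff_mul]
  exact Finset.sum_le_sum fun x _ => mul_le_mul_of_nonneg_right (hfg _) (hh _)

theorem coeff_truncPowProd_nonneg {p : ℕ → ℝ} (hp : ∀ m k, 0 ≤ sMatrix p m k) (t : ℕ)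
    (s : Multiset ℕ) (j : ℕ) : 0 ≤ (truncPowProd p t s).coeff j := by
  induction s using Multiset.induction_on generalizing j with
  | empty =>
    simp only [truncPowProd, Multiset.map_zero, Multiset.prod_zero, Polynomial.coeff_one]
    split_ifs <;> norm_num
  | cons m s ih =>
    rw [truncPowProd_cons, Polynomial.coeff_mul]
    refine Finset.sum_nonneg fun x _ => mul_nonneg ?_ (ih _)
    rw [coeff_truncPow]
    split_ifs
    exacts [hp _ _, le_rfl]

theorem truncPowProd_filter_ne_zero (p : ℕ → ℝ) (t : ℕ) (s : Multiset ℕ) :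
    truncPowProd p t (s.filter (· ≠ 0)) = truncPowProd p t s := by
  induction s using Multiset.induction_on with
  | empty => rfl
  | cons m s ih =>
    by_cases hm : m = 0
    · simp [hm, ih, truncPow_zero]
    · rw [Multiset.filter_cons_of_pos (p := (· ≠ 0)) s hm, truncPowProd_cons, truncPowProd_cons,
        ih]

theorem truncPowProd_eq_of_sumMin_eq (p : ℕ → ℝ) (t : ℕ) {a b : Multiset ℕ}
    (h : ∀ k, sumMin a k = sumMin b k) : truncPowProd p t a = truncPowProd p t b := by
  rw [← truncPowProd_filter_ne_zero, ← truncPowProd_filter_ne_zero p t b]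
  congr 1
  ext m
  simp only [Multiset.count_filter]
  split_ifs with hm
  · obtain ⟨k, rfl⟩ := Nat.exists_eq_succ_of_ne_zero hm
    have := count_succ_eq_sumMin a k
    rw [h, h, h, ← count_succ_eq_sumMin b k] at this
    exact_mod_cast this
  · rfl

theorem coeff_truncPowProd_transfer_le {p : ℕ → ℝ} (hS : IsTN 2 (sMatrix p)) (t : ℕ)
    {x y : ℕ} (hyx : y ≤ x) (c : Multiset ℕ) (j : ℕ) :
    (truncPowProd p t ((x + 1) ::ₘ y ::ₘ c)).coeff j ≤
      (truncPowProd p t (x ::ₘ (y + 1) ::ₘ c)).coeff j := by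
  simp only [truncPowProd_cons, ← mul_assoc]
  exact coeff_mul_le_coeff_mul (coeff_truncPow_transfer_le hS hyx t)
    (coeff_truncPowProd_nonneg (isTN_two_iff.1 hS).1 t c) j

/-- Induction on the total gap between the column sums of `a` and `b`, which each move of a cell
given by `exists_transfer` decreases. -/
theorem coeff_truncPowProd_le_of_sumMin_le {p : ℕ → ℝ} (hS : IsTN 2 (sMatrix p)) (t : ℕ)
    {a b : Multiset ℕ} (hsum : a.sum = b.sum) (hle : ∀ k, sumMin a k ≤ sumMin b k) (j : ℕ) :
    (truncPowProd p t a).coeff j ≤ (truncPowProd p t b).coeff j := by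
  induction hn : ∑ k ∈ range b.sum, (sumMin b k - sumMin a k) using Nat.strong_induction_on
    generalizing a with
  | _ n ih =>
  by_cases heq : ∀ k, sumMin a k = sumMin b k
  · rw [truncPowProd_eq_of_sumMin_eq p t heq]
  push Not at heq
  obtain ⟨s₀, hs₀⟩ := heq
  obtain ⟨x, y, c, hdecomp, hy, hx, hstrict⟩ :=
    exists_transfer hsum hle (lt_of_le_of_ne (hle s₀) hs₀)
  set a' := x ::ₘ (y + 1) ::ₘ c
  have hmove : ∀ k, sumMin a' k = sumMin a k + if y < k ∧ k ≤ x then 1 else 0 := fun k => by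
    rw [sumMin_transfer x y c k (by omega), ← hdecomp, sumMin_cons, Nat.min_zero, zero_add]
  have hsum' : a'.sum = b.sum := by
    rw [← hsum, ← zero_add a.sum, ← Multiset.sum_cons, hdecomp]
    simp only [a', Multiset.sum_cons]
    ring
  have hxb : x < b.sum := by
    rw [← hsum', Multiset.sum_cons, Multiset.sum_cons]
    omega
  have hle' : ∀ k, sumMin a' k ≤ sumMin b k := fun k => by
    rw [hmove]
    split_ifs with h
    exacts [hstrict k h.1 h.2, by simpa using hle k]
  refine le_trans ?_ (ih _ ?_ hsum' hle' rfl)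
  · calc (truncPowProd p t a).coeff j = (truncPowProd p t (0 ::ₘ a)).coeff j := by
          rw [truncPowProd_cons, truncPow_zero, one_mul]
      _ = (truncPowProd p t ((x + 1) ::ₘ y ::ₘ c)).coeff j := by rw [hdecomp]
      _ ≤ _ := coeff_truncPowProd_transfer_le hS t (by omega) c j
  · rw [← hn]
    have := hle s₀
    refine Finset.sum_lt_sum (fun k _ => by rw [hmove]; omega)
      ⟨s₀, Finset.mem_range.2 (by omega), by rw [hmove, if_pos ⟨hy, hx⟩]; omega⟩

/-! ### Partitions -/

namespace PartitionSeq

def parts (lam : PartitionSeq) : Multiset ℕ :=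
  lam.finSupp.toFinset.val.map lam.part

theorem prod_map_parts {M : Type*} [CommMonoid M] (lam : PartitionSeq) {f : ℕ → M}
    (hf : f 0 = 1) : (lam.parts.map f).prod = ∏ᶠ i, f (lam.part i) := by
  rw [finprod_eq_prod_of_mulSupport_subset (s := lam.finSupp.toFinset) _ fun i hi => ?_, parts,
    Multiset.map_map, Finset.prod_map_val]
  · rfl
  · simp only [Function.mem_mulSupport, Set.Finite.coe_toFinset, Function.mem_support] at hi ⊢
    exact fun h => hi (by rw [h, hf])

theorem sum_map_parts {M : Type*} [AddCommMonoid M] (lam : PartitionSeq) {f : ℕ → M}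
    (hf : f 0 = 0) : (lam.parts.map f).sum = ∑ᶠ i, f (lam.part i) := by
  rw [finsum_eq_sum_of_support_subset (s := lam.finSupp.toFinset) _ fun i hi => ?_, parts,
    Multiset.map_map, Finset.sum_map_val]
  · rfl
  · simp only [Function.mem_support, Set.Finite.coe_toFinset] at hi ⊢
    exact fun h => hi (by rw [h, hf])

theorem sum_parts (lam : PartitionSeq) : lam.parts.sum = lam.weight := by
  simpa [weight] using lam.sum_map_parts (f := id) rfl

theorem fPoly_eq_truncPowProd (lam : PartitionSeq) (p : ℕ → ℝ) (t : ℕ) :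
    fPoly lam p t = truncPowProd p t lam.parts :=
  (lam.prod_map_parts (truncPow_zero p t)).symm

theorem exists_support_subset_Icc (lam : PartitionSeq) (j : ℕ) :
    ∃ B, j ≤ B ∧ ∀ i, lam.part i ≠ 0 → i ∈ Icc 1 B := by
  obtain ⟨B, hB⟩ := lam.finSupp.bddAbove
  refine ⟨max j B, le_max_left _ _, fun i hi => Finset.mem_Icc.2 ⟨?_, ?_⟩⟩
  · exact Nat.one_le_iff_ne_zero.2 fun h => hi (h ▸ lam.zero)
  · exact (hB hi).trans (le_max_right _ _)

theorem finsum_comp_part {M : Type*} [AddCommMonoid M] (lam : PartitionSeq) {f : ℕ → M}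
    (hf : f 0 = 0) {j B : ℕ} (hjB : j ≤ B) (hB : ∀ i, lam.part i ≠ 0 → i ∈ Icc 1 B) :
    ∑ᶠ i, f (lam.part i) = ∑ i ∈ Icc 1 j, f (lam.part i) + ∑ i ∈ Ioc j B, f (lam.part i) := by
  rw [finsum_eq_sum_of_support_subset (s := Icc 1 B) _
    fun i hi => hB i fun h => hi (by simp [h, hf])]
  exact (Finset.sum_Ioc_consecutive _ (Nat.zero_le j) hjB).symm

theorem sumMin_parts_add_le (lam : PartitionSeq) (j k : ℕ) :
    sumMin lam.parts k + ∑ i ∈ Icc 1 j, lam.part i ≤ j * k + lam.weight := by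
  obtain ⟨B, hjB, hB⟩ := lam.exists_support_subset_Icc j
  have hw := lam.finsum_comp_part (f := id) rfl hjB hB
  simp only [id] at hw
  rw [sumMin, sum_map_parts _ (min_zero k), finsum_comp_part _ (min_zero k) hjB hB, weight, hw]
  have h₁ : ∑ i ∈ Icc 1 j, min k (lam.part i) ≤ j * k := by
    simpa using Finset.sum_le_sum fun i (_ : i ∈ Icc 1 j) => min_le_left k (lam.part i)
  have h₂ : ∑ i ∈ Ioc j B, min k (lam.part i) ≤ ∑ i ∈ Ioc j B, lam.part i :=
    Finset.sum_le_sum fun i _ => min_le_right _ _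
  omega

theorem sumMin_parts_add_eq (lam : PartitionSeq) {j k : ℕ} (hk : ∀ i ∈ Icc 1 j, k ≤ lam.part i)
    (hk' : lam.part (j + 1) ≤ k) :
    sumMin lam.parts k + ∑ i ∈ Icc 1 j, lam.part i = j * k + lam.weight := by
  obtain ⟨B, hjB, hB⟩ := lam.exists_support_subset_Icc j
  have hw := lam.finsum_comp_part (f := id) rfl hjB hB
  simp only [id] at hw
  rw [sumMin, sum_map_parts _ (min_zero k), finsum_comp_part _ (min_zero k) hjB hB, weight, hw]
  have h₁ : ∑ i ∈ Icc 1 j, min k (lam.part i) = j * k := by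
    simpa using Finset.sum_congr rfl fun i hi => min_eq_left (hk i hi)
  have h₂ : ∑ i ∈ Ioc j B, min k (lam.part i) = ∑ i ∈ Ioc j B, lam.part i :=
    Finset.sum_congr rfl fun i hi => min_eq_right <|
      (lam.antitone (by omega) (Finset.mem_Ioc.1 hi).1).trans hk'
  omega

theorem dominates_iff_sumMin_le {lam mu : PartitionSeq} (hw : lam.weight = mu.weight) :
    lam.Dominates mu ↔ ∀ k, sumMin lam.parts k ≤ sumMin mu.parts k := by
  refine ⟨fun h k => ?_, fun h => ⟨hw, fun j _ => ?_⟩⟩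
  · -- compare at the number `j` of parts of `μ` exceeding `k`
    have hex : ∃ j, mu.part (j + 1) ≤ k := by
      obtain ⟨B, -, hB⟩ := mu.exists_support_subset_Icc 0
      exact ⟨B, by by_contra! h'; simpa using hB (B + 1) (by omega)⟩
    set j := Nat.find hex
    have hmu := mu.sumMin_parts_add_eq (j := j) (fun i hi => ?_) (Nat.find_spec hex)
    · have hdom : ∑ i ∈ Icc 1 j, mu.part i ≤ ∑ i ∈ Icc 1 j, lam.part i := by
        rcases Nat.eq_zero_or_pos j with h0 | hpos
        · simp [h0]
        · exact h.2 j hpos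
      have := lam.sumMin_parts_add_le j k
      omega
    · obtain ⟨hi₁, hi₂⟩ := Finset.mem_Icc.1 hi
      have := Nat.find_min hex (show i - 1 < j by omega)
      rw [Nat.sub_add_cancel hi₁] at this
      omega
  · have hlam := lam.sumMin_parts_add_eq (j := j) (k := lam.part (j + 1))
      (fun i hi => lam.antitone (Finset.mem_Icc.1 hi).1 (by simp at hi; omega)) le_rfl
    have hmu := mu.sumMin_parts_add_le j (lam.part (j + 1))
    have := h (lam.part (j + 1))
    omega

end PartitionSeq

theorem condC_of_dominates {p : ℕ → ℝ} (hS : IsTN 2 (sMatrix p)) {lam mu : PartitionSeq}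
    (h : lam.Dominates mu) : CondC p lam mu := fun j t => by
  rw [probE, probE, lam.fPoly_eq_truncPowProd, mu.fPoly_eq_truncPowProd]
  exact coeff_truncPowProd_le_of_sumMin_le hS t (by rw [lam.sum_parts, mu.sum_parts, h.1])
    ((PartitionSeq.dominates_iff_sumMin_le h.1).1 h) j

/-! ### Top degrees -/

def PosUpTo (u : ℕ → ℝ) (d : ℕ) : Prop :=
  ∀ k, (k ≤ d → 0 < u k) ∧ (d < k → u k = 0)

theorem PosUpTo.nonneg {u : ℕ → ℝ} {d : ℕ} (hu : PosUpTo u d) (k : ℕ) : 0 ≤ u k := by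
  rcases le_or_gt k d with h | h
  exacts [(hu k).1 h |>.le, ((hu k).2 h).ge]

theorem PosUpTo.antidiagonal_sum {u v : ℕ → ℝ} {d e : ℕ} (hu : PosUpTo u d)
    (hv : PosUpTo v e) : PosUpTo (fun k => ∑ x ∈ antidiagonal k, u x.1 * v x.2) (d + e) := by
  refine fun k => ⟨fun hk => ?_, fun hk => Finset.sum_eq_zero fun x hx => ?_⟩
  · refine Finset.sum_pos' (fun x _ => mul_nonneg (hu.nonneg _) (hv.nonneg _))
      ⟨(min k d, k - min k d), by simp,
        mul_pos ((hu _).1 (min_le_right _ _)) ((hv _).1 (by omega))⟩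
  · rw [Finset.HasAntidiagonal.mem_antidiagonal] at hx
    rcases le_or_gt x.1 d with h | h
    · rw [(hv _).2 (by omega), mul_zero]
    · rw [(hu _).2 h, zero_mul]

theorem posUpTo_one_coeff : PosUpTo (fun k => if k = 0 then 1 else 0) 0 := fun k =>
  ⟨fun hk => by simp [Nat.le_zero.1 hk], fun hk => if_neg hk.ne'⟩

theorem posUpTo_sMatrix {p : ℕ → ℝ} {r : ℕ} (hp : PosUpTo p r) (m : ℕ) :
    PosUpTo (sMatrix p m) (r * m) := by
  induction m with
  | zero =>
    rw [mul_zero]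
    convert posUpTo_one_coeff using 1
    ext k
    simp [sMatrix, PowerSeries.coeff_one]
  | succ m ih =>
    have h : sMatrix p (m + 1) = fun k => ∑ x ∈ antidiagonal k, sMatrix p m x.1 * p x.2 := by
      ext k
      simp [sMatrix, pow_succ, PowerSeries.coeff_mul]
    rw [h, mul_add_one]
    exact ih.antidiagonal_sum hp

theorem posUpTo_truncPow {p : ℕ → ℝ} {r : ℕ} (hp : PosUpTo p r) (t m : ℕ) :
    PosUpTo (truncPow p t m).coeff (min t (r * m)) := fun k => by
  have := posUpTo_sMatrix hp m k
  rw [coeff_truncPow]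
  constructor <;> intro hk <;> split_ifs
  exacts [this.1 (by omega), by omega, this.2 (by omega), rfl]

theorem posUpTo_truncPowProd {p : ℕ → ℝ} {r : ℕ} (hp : PosUpTo p r) (t : ℕ) (s : Multiset ℕ) :
    PosUpTo (truncPowProd p t s).coeff (sumMin (s.map (r * ·)) t) := by
  induction s using Multiset.induction_on with
  | empty =>
    rw [Multiset.map_zero, sumMin_zero]
    convert posUpTo_one_coeff using 1
    ext k
    simp [truncPowProd, Polynomial.coeff_one]
  | cons m s ih =>
    rw [Multiset.map_cons, sumMin_cons, truncPowProd_cons]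
    simpa only [← Polynomial.coeff_mul] using (posUpTo_truncPow hp t m).antidiagonal_sum ih

/-- At `t = r k`, the top degree `∑_i min t (r λ_i)` of `∏_i (p(x)^{λ_i} |_t)` is `r` times the
number of cells of `λ` in its first `k` columns. -/
theorem sumMin_le_of_condC {p : ℕ → ℝ} {r : ℕ} (hp : PosUpTo p r) (hr : 0 < r)
    {lam mu : PartitionSeq} (h : CondC p lam mu) (k : ℕ) :
    sumMin lam.parts k ≤ sumMin mu.parts k := by
  have hscale : ∀ s : Multiset ℕ, sumMin (s.map (r * ·)) (r * k) = r * sumMin s k := fun s => by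
    simp only [sumMin, Multiset.map_map, Function.comp_def, min_mul_mul_left,
      Multiset.sum_map_mul_left]
  refine Nat.le_of_mul_le_mul_left ?_ hr
  rw [← hscale, ← hscale]
  by_contra! hlt
  have hpos := (posUpTo_truncPowProd hp (r * k) lam.parts _).1 le_rfl
  have hzero := (posUpTo_truncPowProd hp (r * k) mu.parts _).2 hlt
  have := h (sumMin (lam.parts.map (r * ·)) (r * k)) (r * k)
  rw [probE, probE, lam.fPoly_eq_truncPowProd, mu.fPoly_eq_truncPowProd] at this
  linarith

theorem isTN_two_toeplitz_const_Iic (r : ℕ) {c : ℝ} (hc : 0 ≤ c) :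
    IsTN 2 (toeplitz fun k => if k ≤ r then c else 0) := by
  refine isTN_two_iff.2 ⟨fun i j => ?_, fun i i' j j' hi hj => ?_⟩ <;> simp only [toeplitz] <;>
    split_ifs <;> first | omega | nlinarith [mul_nonneg hc hc]

theorem posUpTo_const_Iic (r : ℕ) {c : ℝ} (hc : 0 < c) :
    PosUpTo (fun k => if k ≤ r then c else 0) r :=
  fun k => ⟨fun hk => by simp [hk, hc], fun hk => by simp [show ¬k ≤ r by omega]⟩

/-- **Corollary (uniform case).** For `U_r` uniform on `{0,1,…,r}` and
partitions `λ, μ` of the same weight, `λ ⊵ μ` iff `C(λ,μ,U_r)`. -/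
theorem dominance_iff_condC_uniform (r : ℕ) (hr : 1 ≤ r) (n : ℕ)
    (lam mu : PartitionSeq) (h1 : lam.weight = n) (h2 : mu.weight = n) :
    lam.Dominates mu ↔
      CondC (fun k => if k ≤ r then (1 : ℝ) / (r + 1) else 0) lam mu := by
  have hc : (0 : ℝ) < 1 / (r + 1) := by positivity
  refine ⟨condC_of_dominates (isTN_two_sMatrix (isTN_two_toeplitz_const_Iic r hc.le)), fun h => ?_⟩
  exact (PartitionSeq.dominates_iff_sumMin_le (h1.trans h2.symm)).2
    (sumMin_le_of_condC (posUpTo_const_Iic r hc) hr h)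
end
end

section
/- Let k ∈ ℕ and let p = {p_n}_{n=0}^∞ be a sequence of real numbers. If the Toeplitz matrix T_p is totally non-negative of order k, then the matrix S_p of coefficients of powers of p is totally non-negative of order k. -/
open Finset

noncomputable section

/-!
Since `p(x)^(i+1) = p(x)^i · p(x)`, deleting row `0` of `S_p` leaves `S_p T_p`. By Cauchy–Binet a
minor of `S_p T_p` is a sum of products of a minor of `S_p` with every row index lowered by one and
a minor of `T_p`. A minor of `S_p` that uses row `0 = (1, 0, 0, …)` either vanishes or is, by
Laplace expansion, a smaller minor. Induction on size plus the sum of the row indices concludes.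
-/

open Classical in
theorem sum_strictMono_comp_perm_eq_sum_injective {l m : ℕ} {M : Type*} [AddCommMonoid M]
    (f : (Fin l → Fin m) → M) :
    ∑ x ∈ univ.filter (fun g : Fin l → Fin m ↦ StrictMono g) ×ˢ univ,
      f (x.1 ∘ ⇑(x.2 : Equiv.Perm (Fin l))) =
      ∑ r : Fin l → Fin m with Function.Injective r, f r := by
  refine sum_bij (fun x _ ↦ x.1 ∘ x.2) ?_ ?_ ?_ fun _ _ ↦ rfl
  · simp only [mem_product, mem_filter_univ, and_imp, Prod.forall]
    exact fun g σ hg _ ↦ hg.injective.comp σ.injective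
  · simp only [mem_product, mem_filter_univ, and_imp, Prod.forall, Prod.mk.injEq]
    intro g σ hg _ g' σ' hg' _ h
    obtain rfl : g = g' := by
      rw [← hg.range_inj hg', ← EquivLike.range_comp g σ, h, EquivLike.range_comp]
    exact ⟨rfl, Equiv.ext fun i ↦ hg.injective (congrFun h i)⟩
  · simp only [mem_filter_univ, mem_product, exists_prop, Prod.exists]
    intro r hr
    have hsorted : StrictMono (r ∘ Tuple.sort r) :=
      (Tuple.monotone_sort r).strictMono_of_injective (hr.comp (Equiv.injective _))
    exact ⟨r ∘ Tuple.sort r, (Tuple.sort r)⁻¹, ⟨hsorted, mem_univ _⟩, by ext; simp⟩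

namespace Matrix

variable {R : Type*} [CommRing R] {l m : ℕ}

theorem det_mul_eq_sum_prod_mul_det_submatrix (A : Matrix (Fin l) (Fin m) R)
    (B : Matrix (Fin m) (Fin l) R) :
    (A * B).det = ∑ r : Fin l → Fin m, (∏ i, A i (r i)) * (B.submatrix r id).det := by
  have hrows : (A * B).det =
      (detRowAlternating : (Fin l → R) [⋀^Fin l]→ₗ[R] R).toMultilinearMap
        fun i ↦ ∑ k, A i k • B k := by
    congr 1
    ext i j
    simp [mul_apply, Finset.sum_apply]
  rw [hrows, MultilinearMap.map_sum]
  refine Fintype.sum_congr _ _ fun r ↦ ?_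
  rw [MultilinearMap.map_smul_univ, smul_eq_mul]
  rfl

open Classical in
/-- The Cauchy–Binet formula. -/
theorem det_mul_eq_sum_strictMono (A : Matrix (Fin l) (Fin m) R) (B : Matrix (Fin m) (Fin l) R) :
    (A * B).det = ∑ g : Fin l → Fin m with StrictMono g,
      (A.submatrix id g).det * (B.submatrix g id).det := by
  have hinj (r : Fin l → Fin m) (hr : ¬Function.Injective r) :
      (∏ i, A i (r i)) * (B.submatrix r id).det = 0 := by
    obtain ⟨i, j, hij, hne⟩ : ∃ i j, r i = r j ∧ i ≠ j := by
      simpa [Function.Injective] using hr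
    rw [det_zero_of_row_eq hne (funext fun k ↦ by simp [hij]), mul_zero]
  rw [det_mul_eq_sum_prod_mul_det_submatrix,
    ← sum_filter_of_ne fun r _ ↦ not_imp_comm.1 (hinj r),
    ← sum_strictMono_comp_perm_eq_sum_injective, sum_product]
  refine sum_congr rfl fun g _ ↦ ?_
  have hA : (A.submatrix id g).det = ∑ σ : Equiv.Perm (Fin l),
      (Equiv.Perm.sign σ : R) * ∏ i, A i (g (σ i)) := by
    rw [← det_transpose, det_apply']
    rfl
  have hB (σ : Equiv.Perm (Fin l)) :
      (B.submatrix (g ∘ σ) id).det = Equiv.Perm.sign σ * (B.submatrix g id).det :=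
    det_permute σ (B.submatrix g id)
  simp only [hA, hB, sum_mul, Function.comp_apply]
  exact sum_congr rfl fun σ _ ↦ by ring

theorem det_mul_nonneg_of_minors_nonneg [PartialOrder R] [IsOrderedRing R]
    {A : Matrix (Fin l) (Fin m) R} {B : Matrix (Fin m) (Fin l) R}
    (hA : ∀ g : Fin l → Fin m, StrictMono g → 0 ≤ (A.submatrix id g).det)
    (hB : ∀ g : Fin l → Fin m, StrictMono g → 0 ≤ (B.submatrix g id).det) :
    0 ≤ (A * B).det := by
  rw [det_mul_eq_sum_strictMono]
  refine sum_nonneg fun g hg ↦ ?_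
  have hg : StrictMono g := (mem_filter_univ g).1 hg
  exact mul_nonneg (hA g hg) (hB g hg)

theorem det_eq_det_submatrix_succ_of_row_zero {n : ℕ} {A : Matrix (Fin (n + 1)) (Fin (n + 1)) R}
    (h : A 0 = Pi.single 0 1) : A.det = (A.submatrix Fin.succ Fin.succ).det := by
  rw [det_succ_row_zero, Fintype.sum_eq_single 0 fun j hj ↦ by simp [h, hj]]
  simp [h]

end Matrix

section SMatrix

variable {p : ℕ → ℝ}

theorem sMatrix_zero_apply (j : ℕ) : sMatrix p 0 j = if j = 0 then 1 else 0 := by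
  simp [sMatrix, PowerSeries.coeff_one]

theorem sMatrix_succ_apply (i : ℕ) {j N : ℕ} (hj : j < N) :
    sMatrix p (i + 1) j = ∑ m ∈ range N, sMatrix p i m * toeplitz p m j := by
  have htail : ∀ m ∈ range N, m ∉ range (j + 1) → sMatrix p i m * toeplitz p m j = 0 :=
    fun m _ hm ↦ by simp_all [toeplitz]
  rw [← sum_subset (range_subset_range.2 hj) htail, sMatrix, pow_succ, PowerSeries.coeff_mul,
    Nat.sum_antidiagonal_eq_sum_range_succ_mk]
  refine sum_congr rfl fun m hm ↦ ?_
  simp_all [sMatrix, toeplitz]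

-- Without both ascriptions `*` elaborates as `CStarMatrix` multiplication.
theorem submatrix_sMatrix_succ_eq_mul {l N : ℕ} (r c : Fin l → ℕ) (hc : ∀ b, c b < N) :
    (sMatrix p).submatrix (fun a ↦ r a + 1) c =
      (sMatrix p).submatrix r (Fin.val : Fin N → ℕ) *
        (toeplitz p).submatrix (Fin.val : Fin N → ℕ) c := by
  ext a b
  rw [Matrix.mul_apply, Matrix.submatrix_apply, sMatrix_succ_apply _ (hc b)]
  exact (Fin.sum_univ_eq_sum_range (fun m ↦ sMatrix p (r a) m * toeplitz p m (c b)) N).symm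

theorem det_submatrix_sMatrix_eq_zero {l : ℕ} {r c : Fin (l + 1) → ℕ} (hr0 : r 0 = 0)
    (hc : Monotone c) (hc0 : c 0 ≠ 0) : ((sMatrix p).submatrix r c).det = 0 :=
  Matrix.det_eq_zero_of_row_eq_zero 0 fun j ↦ by
    have : c 0 ≤ c j := hc (Fin.zero_le j)
    simp only [Matrix.submatrix_apply, hr0, sMatrix_zero_apply, ite_eq_right_iff, one_ne_zero,
      imp_false]
    omega

theorem det_submatrix_sMatrix_eq_det_succ {l : ℕ} {r c : Fin (l + 1) → ℕ} (hr0 : r 0 = 0)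
    (hc : Function.Injective c) (hc0 : c 0 = 0) :
    ((sMatrix p).submatrix r c).det =
      ((sMatrix p).submatrix (r ∘ Fin.succ) (c ∘ Fin.succ)).det :=
  Matrix.det_eq_det_submatrix_succ_of_row_zero <| funext fun j ↦ by
    have : c j = 0 ↔ j = 0 := by rw [← hc.eq_iff, hc0]
    simp [sMatrix_zero_apply, hr0, Pi.single_apply, this]

theorem det_submatrix_sMatrix_nonneg {k : ℕ} (h : IsTN k (toeplitz p)) :
    ∀ {l : ℕ}, l ≤ k → ∀ r c : Fin l → ℕ, StrictMono r → StrictMono c →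
      0 ≤ ((sMatrix p).submatrix r c).det
  | 0, _, _, _, _, _ => by simp
  | l + 1, hl, r, c, hr, hc => by
    by_cases hr0 : r 0 = 0
    · by_cases hc0 : c 0 = 0
      · rw [det_submatrix_sMatrix_eq_det_succ hr0 hc.injective hc0]
        exact det_submatrix_sMatrix_nonneg h (by omega) _ _ (hr.comp Fin.strictMono_succ)
          (hc.comp Fin.strictMono_succ)
      · rw [det_submatrix_sMatrix_eq_zero hr0 hc.monotone hc0]
    · obtain ⟨r, rfl⟩ : ∃ r' : Fin (l + 1) → ℕ, r = fun a ↦ r' a + 1 :=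
        ⟨fun a ↦ r a - 1, funext fun a ↦ by
          have := hr.monotone (Fin.zero_le a)
          dsimp only
          omega⟩
      rw [submatrix_sMatrix_succ_eq_mul r c (N := c (Fin.last l) + 1)
        fun b ↦ Nat.lt_succ_of_le (hc.monotone (Fin.le_last b))]
      exact Matrix.det_mul_nonneg_of_minors_nonneg
        (fun g hg ↦ det_submatrix_sMatrix_nonneg h hl _ _ (fun a b hab ↦ by simpa using hr hab)
          (Fin.val_strictMono.comp hg))
        (fun g hg ↦ h _ hl _ _ (Fin.val_strictMono.comp hg) hc)
termination_by l _ r => l + ∑ a, r a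
decreasing_by
  · rw [Fin.sum_univ_succ r]
    simp only [Function.comp_apply]
    omega
  · subst_vars
    simp only [id, sum_add_distrib, sum_const, card_univ, Fintype.card_fin, smul_eq_mul,
      Nat.succ_eq_add_one]
    omega

end SMatrix

/-- **Theorem.** If the Toeplitz matrix `T_p` is totally non-negative of order
`k`, then so is `S_p`. -/
theorem sMatrix_TN_of_toeplitz_TN (k : ℕ) (p : ℕ → ℝ)
    (h : IsTN k (toeplitz p)) : IsTN k (sMatrix p) :=
  fun _ ↦ det_submatrix_sMatrix_nonneg h
end
end
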